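/- arXiv:1812.01094 — 5 statements merged into one kernel-verified Lean document; each statement's English description precedes it below -/
import Mathlib

section
/- Let X ⊆ ℝⁿ be a nonempty closed convex set, x ∈ X, z ∈ ℝⁿ, and for β > 0 define ȳ(x,z,β) = argmin_{y ∈ X} (⟨z, y−x⟩ + (β/2)‖y−x‖²). Then for every β > 0, ‖ȳ(x,z,1) − x‖ ≤ max(1,β)·‖ȳ(x,z,β) − x‖. -/
open scoped RealInnerProductSpace

private lemma aux_nonneg (a b : ℝ) (hb : 0 ≤ b)
    (h : ∀ t : ℝ, 0 < t → t ≤ 1 → 0 ≤ a + t * b) : 0 ≤ a := by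
  by_contra h'
  push_neg at h'
  have ht0 : 0 < min 1 (-a / (2 * (b + 1))) := by
    apply lt_min one_pos
    apply div_pos (by linarith) (by linarith)
  have ht1 : min 1 (-a / (2 * (b + 1))) ≤ 1 := min_le_left _ _
  have := h _ ht0 ht1
  have h2 : min 1 (-a / (2 * (b + 1))) ≤ -a / (2 * (b + 1)) := min_le_right _ _
  have hbp : 0 < 2 * (b + 1) := by linarith
  have h3 : min 1 (-a / (2 * (b + 1))) * b ≤ (-a / (2 * (b + 1))) * b := by
    exact mul_le_mul_of_nonneg_right h2 hb
  have h4 : (-a / (2 * (b + 1))) * b < -a := by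
    rw [div_mul_eq_mul_div, div_lt_iff₀ hbp]
    nlinarith
  linarith

private lemma var_ineq {n : ℕ} (X : Set (EuclideanSpace ℝ (Fin n)))
    (hXconv : Convex ℝ X) (x z : EuclideanSpace ℝ (Fin n))
    (c : ℝ) (hc : 0 < c) (ys : EuclideanSpace ℝ (Fin n)) (hys : ys ∈ X)
    (hmin : IsMinOn (fun y => ⟪z, y - x⟫ + (c / 2) * ‖y - x‖ ^ 2) X ys)
    (w : EuclideanSpace ℝ (Fin n)) (hw : w ∈ X) :
    0 ≤ ⟪z, w - ys⟫ + c * ⟪ys - x, w - ys⟫ := by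
  apply aux_nonneg _ ((c / 2) * ‖w - ys‖ ^ 2) (by positivity)
  intro t ht0 ht1
  have hmem : (1 - t) • ys + t • w ∈ X :=
    hXconv hys hw (by linarith) (le_of_lt ht0) (by ring)
  have hle := hmin hmem
  simp only [Set.mem_setOf_eq] at hle
  have hp : (1 - t) • ys + t • w - x = (ys - x) + t • (w - ys) := by
    rw [smul_sub, sub_smul, one_smul]; abel
  rw [hp] at hle
  have hnorm : ‖(ys - x) + t • (w - ys)‖ ^ 2
      = ‖ys - x‖ ^ 2 + 2 * (t * ⟪ys - x, w - ys⟫) + t ^ 2 * ‖w - ys‖ ^ 2 := by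
    rw [norm_add_sq_real, real_inner_smul_right, norm_smul]
    simp [mul_pow, abs_of_pos ht0]
  rw [hnorm] at hle
  have hinner : ⟪z, (ys - x) + t • (w - ys)⟫ = ⟪z, ys - x⟫ + t * ⟪z, w - ys⟫ := by
    rw [inner_add_right, real_inner_smul_right]
  rw [hinner] at hle
  have ht2 : 0 ≤ t * (⟪z, w - ys⟫ + c * ⟪ys - x, w - ys⟫ + t * ((c / 2) * ‖w - ys‖ ^ 2)) := by
    nlinarith [hle]
  have := nonneg_of_mul_nonneg_right ht2 ht0
  nlinarith [this]

theorem stmt0 {n : ℕ} (X : Set (EuclideanSpace ℝ (Fin n)))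
    (hXne : X.Nonempty) (hXcl : IsClosed X) (hXconv : Convex ℝ X)
    (x : EuclideanSpace ℝ (Fin n)) (hx : x ∈ X) (z : EuclideanSpace ℝ (Fin n))
    (β : ℝ) (hβ : 0 < β)
    (y1 yβ : EuclideanSpace ℝ (Fin n)) (hy1X : y1 ∈ X) (hyβX : yβ ∈ X)
    (hy1 : IsMinOn (fun y => ⟪z, y - x⟫ + (1 / 2) * ‖y - x‖ ^ 2) X y1)
    (hyβ : IsMinOn (fun y => ⟪z, y - x⟫ + (β / 2) * ‖y - x‖ ^ 2) X yβ) :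
    ‖y1 - x‖ ≤ max 1 β * ‖yβ - x‖ := by
  have V1 := var_ineq X hXconv x z 1 one_pos y1 hy1X (by simpa using hy1) yβ hyβX
  have Vβ := var_ineq X hXconv x z β hβ yβ hyβX hyβ y1 hy1X
  -- expand inner products
  have e1 : yβ - y1 = (yβ - x) - (y1 - x) := by abel
  have e2 : y1 - yβ = (y1 - x) - (yβ - x) := by abel
  rw [e1] at V1
  rw [e2] at Vβ
  have E1 : ⟪y1 - x, (yβ - x) - (y1 - x)⟫ = ⟪y1 - x, yβ - x⟫ - ‖y1 - x‖ ^ 2 := by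
    rw [inner_sub_right, real_inner_self_eq_norm_sq]
  have E2 : ⟪yβ - x, (y1 - x) - (yβ - x)⟫ = ⟪y1 - x, yβ - x⟫ - ‖yβ - x‖ ^ 2 := by
    rw [inner_sub_right, real_inner_self_eq_norm_sq, real_inner_comm]
  have Ez1 : ⟪z, (yβ - x) - (y1 - x)⟫ = ⟪z, yβ - x⟫ - ⟪z, y1 - x⟫ := inner_sub_right _ _ _
  have Ez2 : ⟪z, (y1 - x) - (yβ - x)⟫ = ⟪z, y1 - x⟫ - ⟪z, yβ - x⟫ := inner_sub_right _ _ _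
  rw [E1, Ez1] at V1
  rw [E2, Ez2] at Vβ
  have hkey : ‖y1 - x‖ ^ 2 + β * ‖yβ - x‖ ^ 2 ≤ (1 + β) * ⟪y1 - x, yβ - x⟫ := by
    nlinarith [V1, Vβ]
  have hcs : ⟪y1 - x, yβ - x⟫ ≤ ‖y1 - x‖ * ‖yβ - x‖ := real_inner_le_norm _ _
  have hu : 0 ≤ ‖y1 - x‖ := norm_nonneg _
  have hv : 0 ≤ ‖yβ - x‖ := norm_nonneg _
  have hcs' : (1 + β) * ⟪y1 - x, yβ - x⟫ ≤ (1 + β) * (‖y1 - x‖ * ‖yβ - x‖) := by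
    apply mul_le_mul_of_nonneg_left hcs (by linarith)
  rcases le_total 1 β with hb | hb
  · rw [max_eq_right hb]
    by_contra hcon
    push_neg at hcon
    have h1 : ‖yβ - x‖ < ‖y1 - x‖ := by nlinarith
    have h2 : 0 < (‖y1 - x‖ - β * ‖yβ - x‖) * (‖y1 - x‖ - ‖yβ - x‖) :=
      mul_pos (by linarith) (by linarith)
    nlinarith
  · rw [max_eq_left hb, one_mul]
    by_contra hcon
    push_neg at hcon
    have h1 : β * ‖yβ - x‖ < ‖y1 - x‖ := by nlinarith
    have h2 : 0 < (‖y1 - x‖ - β * ‖yβ - x‖) * (‖y1 - x‖ - ‖yβ - x‖) :=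
      mul_pos (by linarith) (by linarith)
    nlinarith
end

section
/- Let X ⊆ ℝⁿ be a nonempty closed convex set with 0 ∈ X, z ∈ ℝⁿ, and for τ > 0 set y(τ) = Π_X(−z/τ). If 0 < β ≤ 1, then ‖y(β)‖ ≥ ‖y(1)‖. -/
open scoped RealInnerProductSpace

theorem stmt2 {n : ℕ} (X : Set (EuclideanSpace ℝ (Fin n)))
    (hXne : X.Nonempty) (hXcl : IsClosed X) (hXconv : Convex ℝ X)
    (h0 : (0 : EuclideanSpace ℝ (Fin n)) ∈ X)
    (z : EuclideanSpace ℝ (Fin n)) (β : ℝ) (hβ0 : 0 < β) (hβ1 : β ≤ 1)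
    (yβ y1 : EuclideanSpace ℝ (Fin n)) (hyβX : yβ ∈ X) (hy1X : y1 ∈ X)
    (hyβ : IsMinOn (fun y => ‖y - (-(β⁻¹ • z))‖) X yβ)
    (hy1 : IsMinOn (fun y => ‖y - (-z)‖) X y1) :
    ‖y1‖ ≤ ‖yβ‖ := by
  have key : ∀ (u v : EuclideanSpace ℝ (Fin n)), v ∈ X →
      IsMinOn (fun y => ‖y - u‖) X v → ∀ w ∈ X, ⟪u - v, w - v⟫ ≤ 0 := by
    intro u v hv hmin w hw
    haveI : Nonempty ↑X := ⟨⟨v, hv⟩⟩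
    have hbdd : BddBelow (Set.range fun w : X => ‖u - (w : EuclideanSpace ℝ (Fin n))‖) := by
      refine ⟨0, ?_⟩
      rintro _ ⟨w, rfl⟩
      exact norm_nonneg _
    have hle : (⨅ w : X, ‖u - w‖) ≤ ‖u - v‖ := ciInf_le hbdd ⟨v, hv⟩
    have hge : ∀ w : X, ‖u - v‖ ≤ ‖u - (w : EuclideanSpace ℝ (Fin n))‖ := by
      intro w
      have := hmin w.2
      simpa [norm_sub_rev] using this
    have h : ‖u - v‖ = ⨅ w : X, ‖u - w‖ := le_antisymm (le_ciInf hge) hle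
    exact (norm_eq_iInf_iff_real_inner_le_zero hXconv hv).1 h w hw
  have h1 : ⟪-z - y1, yβ - y1⟫ ≤ 0 := key (-z) y1 hy1X hy1 yβ hyβX
  have h2 : ⟪β⁻¹ • (-z) - yβ, y1 - yβ⟫ ≤ 0 := by
    refine key (β⁻¹ • (-z)) yβ hyβX ?_ y1 hy1X
    simpa [smul_neg] using hyβ
  have h2' : ⟪-z - β • yβ, y1 - yβ⟫ ≤ 0 := by
    have := mul_nonpos_of_nonneg_of_nonpos hβ0.le h2
    rw [← real_inner_smul_left] at this
    rwa [smul_sub, smul_smul, mul_inv_cancel₀ hβ0.ne', one_smul] at this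
  have hsum : β * ‖yβ‖ ^ 2 - (1 + β) * ⟪yβ, y1⟫ + ‖y1‖ ^ 2 ≤ 0 := by
    have h1' := h1
    have h2'' := h2'
    simp only [inner_sub_left, inner_sub_right, real_inner_smul_left, inner_neg_left,
      inner_neg_right, real_inner_self_eq_norm_sq] at h1' h2''
    have hc : ⟪y1, yβ⟫ = ⟪yβ, y1⟫ := real_inner_comm _ _
    nlinarith [h1', h2'']
  have hcs : ⟪yβ, y1⟫ ≤ ‖yβ‖ * ‖y1‖ := real_inner_le_norm yβ y1
  by_contra hlt
  push_neg at hlt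
  have hba : 0 < ‖y1‖ - β * ‖yβ‖ := by nlinarith [norm_nonneg yβ]
  nlinarith [mul_pos (sub_pos.mpr hlt) hba]
end

section
/- Let X ⊆ ℝⁿ be a nonempty closed convex set, β > 0, and define η(x,z) = min_{y ∈ X} (⟨z, y−x⟩ + (β/2)‖y−x‖²) with unique minimizer ȳ(x,z). Then the partial gradients of η are ∇_x η(x,z) = −z + β(x − ȳ(x,z)) and ∇_z η(x,z) = ȳ(x,z) − x. -/
open scoped RealInnerProductSpace

section Aux

variable {F : Type*} [NormedAddCommGroup F] [InnerProductSpace ℝ F] [CompleteSpace F]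

/-- Exact expansion of the quadratic objective. -/
lemma quad_expand (z x yb d : F) (β : ℝ) :
    ⟪z, (yb + d) - x⟫ + (β / 2) * ‖(yb + d) - x‖ ^ 2
      = (⟪z, yb - x⟫ + (β / 2) * ‖yb - x‖ ^ 2)
        + (⟪z, d⟫ + β * ⟪yb - x, d⟫) + (β / 2) * ‖d‖ ^ 2 := by
  have h1 : (yb + d) - x = (yb - x) + d := by abel
  rw [h1, norm_add_sq_real, inner_add_right]
  ring

/-- Strong-convexity bound at the constrained minimizer. -/
lemma key_lemma {X : Set F} (hXconv : Convex ℝ X) {β : ℝ} (hβ : 0 < β)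
    (x z yb : F) (hyb : yb ∈ X)
    (hmin : IsMinOn (fun y => ⟪z, y - x⟫ + (β / 2) * ‖y - x‖ ^ 2) X yb) :
    ∀ y ∈ X, (⟪z, yb - x⟫ + (β / 2) * ‖yb - x‖ ^ 2) + (β / 2) * ‖y - yb‖ ^ 2
      ≤ ⟪z, y - x⟫ + (β / 2) * ‖y - x‖ ^ 2 := by
  intro y hy
  set d : F := y - yb with hd
  set c : ℝ := ⟪z, d⟫ + β * ⟪yb - x, d⟫ with hc
  set K : ℝ := (β / 2) * ‖d‖ ^ 2 with hK
  have hKnn : 0 ≤ K := by positivity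
  have hexp : ∀ t : ℝ, ⟪z, (yb + t • d) - x⟫ + (β / 2) * ‖(yb + t • d) - x‖ ^ 2
      = (⟪z, yb - x⟫ + (β / 2) * ‖yb - x‖ ^ 2) + t * c + t ^ 2 * K := by
    intro t
    rw [quad_expand z x yb (t • d) β, real_inner_smul_right, real_inner_smul_right,
      norm_smul, Real.norm_eq_abs, mul_pow, sq_abs, hc, hK]
    ring
  have hmem : ∀ t : ℝ, t ∈ Set.Ioc (0:ℝ) 1 → yb + t • d ∈ X := by
    intro t ht
    have := hXconv hyb hy (by linarith [ht.1, ht.2] : (0:ℝ) ≤ 1 - t)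
      (le_of_lt ht.1) (by ring)
    convert this using 1
    rw [hd]
    module
  have h0 : ∀ t : ℝ, t ∈ Set.Ioc (0:ℝ) 1 → 0 ≤ c + t * K := by
    intro t ht
    have hle := hmin (hmem t ht)
    simp only [Set.mem_setOf_eq] at hle
    rw [hexp t] at hle
    have ht0 := ht.1
    nlinarith [hle]
  have hc0 : 0 ≤ c := by
    have : ∀ ε : ℝ, 0 < ε → 0 ≤ c + ε := by
      intro ε hε
      set t : ℝ := min 1 (ε / (K + 1)) with htdef
      have htpos : 0 < t := lt_min one_pos (div_pos hε (by linarith))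
      have ht1 : t ≤ 1 := min_le_left _ _
      have h1 := h0 t ⟨htpos, ht1⟩
      have htK : t * K ≤ ε := by
        have h2 : t ≤ ε / (K + 1) := min_le_right _ _
        have h3 : t * (K + 1) ≤ ε := (le_div_iff₀ (by linarith : (0:ℝ) < K + 1)).mp h2
        nlinarith
      linarith
    by_contra h
    push_neg at h
    have := this (-c / 2) (by linarith)
    linarith
  have hy1 : ⟪z, y - x⟫ + (β / 2) * ‖y - x‖ ^ 2
      = (⟪z, yb - x⟫ + (β / 2) * ‖yb - x‖ ^ 2) + c + K := by
    have := hexp 1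
    simp only [one_smul, one_pow, one_mul] at this
    rw [show yb + d = y by rw [hd]; abel] at this
    linarith
  rw [hy1, hK, hd]
  linarith

/-- A two-sided quadratic bound implies the gradient. -/
lemma hasGradientAt_of_quadratic_bound {f : F → ℝ} {g x : F} {C : ℝ} (hC : 0 < C)
    (h : ∀ x', |f x' - f x - ⟪g, x' - x⟫| ≤ C * ‖x' - x‖ ^ 2) :
    HasGradientAt f g x := by
  rw [hasGradientAt_iff_isLittleO, Asymptotics.isLittleO_iff]
  intro c hc
  have hball : ∀ᶠ x' in nhds x, ‖x' - x‖ < c / C := by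
    filter_upwards [Metric.ball_mem_nhds x (div_pos hc hC)] with x' hx'
    rwa [Metric.mem_ball, dist_eq_norm] at hx'
  filter_upwards [hball] with x' hx'
  have h1 := h x'
  have h2 : (0:ℝ) ≤ ‖x' - x‖ := norm_nonneg _
  have h3 : C * ‖x' - x‖ < c := by
    rw [lt_div_iff₀ hC] at hx'
    nlinarith
  calc ‖f x' - f x - ⟪g, x' - x⟫‖ = |f x' - f x - ⟪g, x' - x⟫| := Real.norm_eq_abs _
    _ ≤ C * ‖x' - x‖ ^ 2 := h1
    _ ≤ c * ‖x' - x‖ := by nlinarith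

end Aux

theorem stmt4 {n : ℕ} (X : Set (EuclideanSpace ℝ (Fin n)))
    (hXne : X.Nonempty) (hXcl : IsClosed X) (hXconv : Convex ℝ X)
    (β : ℝ) (hβ : 0 < β)
    (ybar : EuclideanSpace ℝ (Fin n) → EuclideanSpace ℝ (Fin n) → EuclideanSpace ℝ (Fin n))
    (η : EuclideanSpace ℝ (Fin n) → EuclideanSpace ℝ (Fin n) → ℝ)
    (hymem : ∀ x z, ybar x z ∈ X)
    (hymin : ∀ x z, IsMinOn (fun y => ⟪z, y - x⟫ + (β / 2) * ‖y - x‖ ^ 2) X (ybar x z))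
    (hη : ∀ x z, η x z = ⟪z, ybar x z - x⟫ + (β / 2) * ‖ybar x z - x‖ ^ 2) :
    ∀ x z, HasGradientAt (fun x' => η x' z) (-z + β • (x - ybar x z)) x ∧
      HasGradientAt (fun z' => η x z') (ybar x z - x) z := by
  intro x z
  -- exact translation identity in the x-variable
  have hshift : ∀ (y x' : EuclideanSpace ℝ (Fin n)),
      ⟪z, y - x'⟫ + (β / 2) * ‖y - x'‖ ^ 2
        = (⟪z, y - x⟫ + (β / 2) * ‖y - x‖ ^ 2)
          + ⟪-z + β • (x - y), x' - x⟫ + (β / 2) * ‖x' - x‖ ^ 2 := by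
    intro y x'
    have e1 : ⟪z, y - x'⟫ = ⟪z, y - x⟫ - ⟪z, x' - x⟫ := by
      rw [← inner_sub_right]; congr 1; abel
    have e2 : ‖y - x'‖ ^ 2 = ‖y - x‖ ^ 2 - 2 * ⟪y - x, x' - x⟫ + ‖x' - x‖ ^ 2 := by
      have h1 : y - x' = (y - x) + (-(x' - x)) := by abel
      rw [h1, norm_add_sq_real, inner_neg_right, norm_neg]; ring
    have e3 : ⟪-z + β • (x - y), x' - x⟫ = -⟪z, x' - x⟫ - β * ⟪y - x, x' - x⟫ := by
      rw [inner_add_left, inner_neg_left, real_inner_smul_left]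
      have h2 : ⟪x - y, x' - x⟫ = - ⟪y - x, x' - x⟫ := by
        rw [show x - y = -(y - x) by abel, inner_neg_left]
      rw [h2]; ring
    rw [e1, e2, e3]; ring
  have key := fun x z => key_lemma hXconv hβ x z (ybar x z) (hymem x z) (hymin x z)
  constructor
  · -- gradient in x
    apply hasGradientAt_of_quadratic_bound (half_pos hβ)
    intro x'
    set G : EuclideanSpace ℝ (Fin n) := -z + β • (x - ybar x z) with hG
    -- upper bound
    have hup : η x' z - η x z - ⟪G, x' - x⟫ ≤ β / 2 * ‖x' - x‖ ^ 2 := by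
      have h1 := (hymin x' z) (hymem x z)
      simp only [Set.mem_setOf_eq] at h1
      rw [← hη x' z] at h1
      have h2 := hshift (ybar x z) x'
      rw [← hη x z] at h2
      linarith [h1.trans_eq h2]
    -- lower bound
    have hlo : 0 ≤ η x' z - η x z - ⟪G, x' - x⟫ := by
      set yb := ybar x z
      set yb' := ybar x' z
      have h1 : η x' z = (⟪z, yb' - x⟫ + (β / 2) * ‖yb' - x‖ ^ 2)
          + ⟪-z + β • (x - yb'), x' - x⟫ + (β / 2) * ‖x' - x‖ ^ 2 := by
        rw [hη x' z]; exact hshift yb' x'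
      have h2 : η x z + (β / 2) * ‖yb' - yb‖ ^ 2
          ≤ ⟪z, yb' - x⟫ + (β / 2) * ‖yb' - x‖ ^ 2 := by
        rw [hη x z]; exact key x z yb' (hymem x' z)
      have h3 : ⟪-z + β • (x - yb'), x' - x⟫
          = ⟪G, x' - x⟫ + β * ⟪yb - yb', x' - x⟫ := by
        rw [hG]
        have : -z + β • (x - yb') = (-z + β • (x - yb)) + β • (yb - yb') := by module
        rw [this, inner_add_left, real_inner_smul_left]
      have h4 : - (‖yb - yb'‖ * ‖x' - x‖) ≤ ⟪yb - yb', x' - x⟫ :=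
        (abs_le.mp (abs_real_inner_le_norm (yb - yb') (x' - x))).1
      have h5 : ‖yb' - yb‖ = ‖yb - yb'‖ := by rw [← norm_neg]; congr 1; abel
      have h6 : 0 ≤ β / 2 * (‖yb - yb'‖ - ‖x' - x‖) ^ 2 := by positivity
      rw [h1, h3]
      rw [h5] at h2
      nlinarith [h2, h4, h6]
    rw [abs_le]
    constructor <;> linarith [sq_nonneg ‖x' - x‖, mul_nonneg (le_of_lt (half_pos hβ)) (sq_nonneg ‖x' - x‖)]
  · -- gradient in z
    have hCpos : 0 < 1 / (2 * β) := by positivity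
    apply hasGradientAt_of_quadratic_bound hCpos
    intro z'
    set yb := ybar x z
    set yb' := ybar x z'
    have hlin : ∀ (y : EuclideanSpace ℝ (Fin n)),
        ⟪z', y - x⟫ = ⟪z, y - x⟫ + ⟪y - x, z' - z⟫ := by
      intro y
      have e : ⟪z', y - x⟫ = ⟪z, y - x⟫ + ⟪z' - z, y - x⟫ := by
        rw [← inner_add_left]; congr 1; abel
      rw [e, real_inner_comm (z' - z) (y - x)]
    -- upper bound
    have hup : η x z' - η x z - ⟪yb - x, z' - z⟫ ≤ 0 := by
      have h1 := (hymin x z') (hymem x z)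
      simp only [Set.mem_setOf_eq] at h1
      rw [← hη x z'] at h1
      have h2 : ⟪z', yb - x⟫ + (β / 2) * ‖yb - x‖ ^ 2
          = η x z + ⟪yb - x, z' - z⟫ := by
        rw [hη x z, hlin yb]; ring
      linarith [h1.trans_eq h2]
    -- lower bound
    have hlo : - (1 / (2 * β) * ‖z' - z‖ ^ 2) ≤ η x z' - η x z - ⟪yb - x, z' - z⟫ := by
      have key2 := key_lemma hXconv hβ x z yb (hymem x z) (hymin x z) yb' (hymem x z')
      have h1 : η x z' = ⟪z, yb' - x⟫ + (β / 2) * ‖yb' - x‖ ^ 2 + ⟪yb' - x, z' - z⟫ := by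
        rw [hη x z', hlin yb']; ring
      have h2 : η x z + (β / 2) * ‖yb' - yb‖ ^ 2
          ≤ ⟪z, yb' - x⟫ + (β / 2) * ‖yb' - x‖ ^ 2 := by
        rw [hη x z]; exact key2
      have h3 : ⟪yb' - x, z' - z⟫ = ⟪yb - x, z' - z⟫ + ⟪yb' - yb, z' - z⟫ := by
        rw [show yb' - x = (yb - x) + (yb' - yb) by abel, inner_add_left]
      have h4 : - (‖yb' - yb‖ * ‖z' - z‖) ≤ ⟪yb' - yb, z' - z⟫ :=
        (abs_le.mp (abs_real_inner_le_norm (yb' - yb) (z' - z))).1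
      have h6 : 0 ≤ (β * ‖yb' - yb‖ - ‖z' - z‖) ^ 2 := sq_nonneg _
      rw [h1, h3]
      have hinv : (2 * β) * (1 / (2 * β) * ‖z' - z‖ ^ 2) = ‖z' - z‖ ^ 2 := by
        field_simp
      nlinarith [h2, h4, h6, hβ, hinv]
    rw [abs_le]
    constructor <;> nlinarith [hlo, hup, sq_nonneg ‖z' - z‖, mul_nonneg (le_of_lt hCpos) (sq_nonneg ‖z' - z‖)]
end

section
/- Let X ⊆ ℝⁿ be a nonempty closed convex set and β > 0. The function (x,z) ↦ η(x,z) := min_{y ∈ X} (⟨z, y−x⟩ + (β/2)‖y−x‖²) has Lipschitz continuous gradient with constant L_{∇η} = 2·√((1+β)² + (1 + 1/(2β))²) on ℝⁿ × ℝⁿ (with the Euclidean product norm). -/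
open scoped RealInnerProductSpace

private lemma vi_aux5 {n : ℕ} {X : Set (EuclideanSpace ℝ (Fin n))} (hXconv : Convex ℝ X)
    {β : ℝ} (hβ : 0 < β) {x z yb : EuclideanSpace ℝ (Fin n)} (hy : yb ∈ X)
    (hmin : IsMinOn (fun y => ⟪z, y - x⟫ + (β / 2) * ‖y - x‖ ^ 2) X yb)
    {w : EuclideanSpace ℝ (Fin n)} (hw : w ∈ X) :
    0 ≤ ⟪z + β • (yb - x), w - yb⟫ := by
  by_contra hc
  push_neg at hc
  set d := w - yb with hd
  set c : ℝ := ⟪z + β • (yb - x), d⟫ with hcdef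
  set M : ℝ := β / 2 * ‖d‖ ^ 2 with hM
  have hM0 : 0 ≤ M := by positivity
  set t : ℝ := min 1 ((-c) / (M + 1)) with ht
  have ht0 : 0 < t := lt_min one_pos (div_pos (by linarith) (by linarith))
  have ht1 : t ≤ 1 := min_le_left _ _
  have htM : M * t < -c := by
    have h1 : t ≤ (-c) / (M + 1) := min_le_right _ _
    have : M * t ≤ M * ((-c) / (M + 1)) := by
      apply mul_le_mul_of_nonneg_left h1 hM0
    have h2 : M * ((-c) / (M + 1)) < -c := by
      rw [mul_div_assoc']
      rw [div_lt_iff₀ (by linarith)]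
      nlinarith
    linarith
  have hmem : yb + t • d ∈ X := by
    have := hXconv hy hw (by linarith : (0:ℝ) ≤ 1 - t) (le_of_lt ht0) (by ring)
    have heq : (1 - t) • yb + t • w = yb + t • d := by
      rw [hd]; module
    rwa [heq] at this
  have hle := hmin hmem
  simp only [Set.mem_setOf_eq] at hle
  have hexp : ⟪z, yb + t • d - x⟫ + (β / 2) * ‖yb + t • d - x‖ ^ 2
      = (⟪z, yb - x⟫ + (β / 2) * ‖yb - x‖ ^ 2) + (t * c + M * t ^ 2) := by
    have h1 : yb + t • d - x = (yb - x) + t • d := by abel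
    rw [h1, inner_add_right, real_inner_smul_right, norm_add_sq_real,
      real_inner_smul_right, norm_smul, Real.norm_eq_abs, abs_of_pos ht0]
    simp only [hcdef, hM, inner_add_left, real_inner_smul_left]
    ring
  have hneg : t * c + M * t ^ 2 < 0 := by
    have : c + M * t < 0 := by linarith
    nlinarith
  rw [hexp] at hle
  linarith

private lemma nonexp5 {n : ℕ} {β : ℝ} (hβ : 0 < β)
    (x z x' z' yb yb' : EuclideanSpace ℝ (Fin n))
    (h1 : 0 ≤ ⟪z + β • (yb - x), yb' - yb⟫)
    (h2 : 0 ≤ ⟪z' + β • (yb' - x'), yb - yb'⟫) :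
    ‖yb - yb'‖ ≤ ‖(x - x') - β⁻¹ • (z - z')‖ := by
  have key : ⟪z + β • (yb - x), yb' - yb⟫ + ⟪z' + β • (yb' - x'), yb - yb'⟫
      = β * (⟪(x - x') - β⁻¹ • (z - z'), yb - yb'⟫ - ‖yb - yb'‖ ^ 2) := by
    rw [norm_sub_sq_real]
    simp only [inner_add_left, inner_sub_left, inner_sub_right, real_inner_smul_left,
      real_inner_smul_right, real_inner_self_eq_norm_sq]
    rw [real_inner_comm yb' yb]
    field_simp
    ring
  have hsq : ‖yb - yb'‖ ^ 2 ≤ ⟪(x - x') - β⁻¹ • (z - z'), yb - yb'⟫ := by nlinarith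
  have hcs := real_inner_le_norm ((x - x') - β⁻¹ • (z - z')) (yb - yb')
  nlinarith [norm_nonneg (yb - yb'), norm_nonneg ((x - x') - β⁻¹ • (z - z')),
    sq_nonneg (‖yb - yb'‖)]

private lemma key5 : ∀ a b c g : ℝ, 0 ≤ a → 0 ≤ b → 0 < c → 0 < g →
    (2 * b + 2 * c * a) ^ 2 + (2 * a + g * b) ^ 2
      ≤ 4 * ((1 + c) ^ 2 + (1 + g / 2) ^ 2) * (a ^ 2 + b ^ 2) := by
  intro a b c g ha hb hc hg
  nlinarith [sq_nonneg (2 * c * b - 2 * a), sq_nonneg (g * a - 2 * b),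
    mul_nonneg (mul_nonneg hc.le ha) ha, mul_nonneg (mul_nonneg hc.le hb) hb,
    mul_nonneg (mul_nonneg hg.le ha) ha, mul_nonneg (mul_nonneg hg.le hb) hb]

theorem stmt5 {n : ℕ} (X : Set (EuclideanSpace ℝ (Fin n)))
    (hXne : X.Nonempty) (hXcl : IsClosed X) (hXconv : Convex ℝ X)
    (β : ℝ) (hβ : 0 < β)
    (ybar : EuclideanSpace ℝ (Fin n) → EuclideanSpace ℝ (Fin n) → EuclideanSpace ℝ (Fin n))
    (hymem : ∀ x z, ybar x z ∈ X)
    (hymin : ∀ x z, IsMinOn (fun y => ⟪z, y - x⟫ + (β / 2) * ‖y - x‖ ^ 2) X (ybar x z)) :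
    ∀ x z x' z' : EuclideanSpace ℝ (Fin n),
      Real.sqrt (‖(-z + β • (x - ybar x z)) - (-z' + β • (x' - ybar x' z'))‖ ^ 2 +
          ‖(ybar x z - x) - (ybar x' z' - x')‖ ^ 2) ≤
        2 * Real.sqrt ((1 + β) ^ 2 + (1 + 1 / (2 * β)) ^ 2) *
          Real.sqrt (‖x - x'‖ ^ 2 + ‖z - z'‖ ^ 2) := by
  intro x z x' z'
  set yb := ybar x z with hyb
  set yb' := ybar x' z' with hyb'
  set s : ℝ := ‖x - x'‖ with hs
  set t : ℝ := ‖z - z'‖ with htt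
  set r : ℝ := ‖yb - yb'‖ with hrr
  have hs0 : 0 ≤ s := norm_nonneg _
  have ht0 : 0 ≤ t := norm_nonneg _
  have hr0 : 0 ≤ r := norm_nonneg _
  have hγ : 0 < β⁻¹ := inv_pos.2 hβ
  have hβγ : β * β⁻¹ = 1 := mul_inv_cancel₀ hβ.ne'
  -- nonexpansiveness
  have hne : r ≤ ‖(x - x') - β⁻¹ • (z - z')‖ :=
    nonexp5 hβ x z x' z' yb yb'
      (vi_aux5 hXconv hβ (hymem x z) (hymin x z) (hymem x' z'))
      (vi_aux5 hXconv hβ (hymem x' z') (hymin x' z') (hymem x z))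
  have hP : ‖(x - x') - β⁻¹ • (z - z')‖ ≤ s + β⁻¹ * t := by
    calc ‖(x - x') - β⁻¹ • (z - z')‖ ≤ ‖x - x'‖ + ‖β⁻¹ • (z - z')‖ := norm_sub_le _ _
      _ = s + β⁻¹ * t := by rw [norm_smul, Real.norm_eq_abs, abs_of_pos hγ]
  have hr : r ≤ s + β⁻¹ * t := hne.trans hP
  -- component bounds
  have hAeq : (-z + β • (x - yb)) - (-z' + β • (x' - yb'))
      = (-(z - z') + β • (x - x')) - β • (yb - yb') := by module
  have hA : ‖(-z + β • (x - yb)) - (-z' + β • (x' - yb'))‖ ≤ t + β * s + β * r := by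
    rw [hAeq]
    calc ‖(-(z - z') + β • (x - x')) - β • (yb - yb')‖
        ≤ ‖-(z - z') + β • (x - x')‖ + ‖β • (yb - yb')‖ := norm_sub_le _ _
      _ ≤ (‖-(z - z')‖ + ‖β • (x - x')‖) + ‖β • (yb - yb')‖ := by
          gcongr; exact norm_add_le _ _
      _ = t + β * s + β * r := by
          rw [norm_neg, norm_smul, norm_smul, Real.norm_eq_abs, abs_of_pos hβ]
  have hBeq : (yb - x) - (yb' - x') = (yb - yb') - (x - x') := by abel
  have hB : ‖(yb - x) - (yb' - x')‖ ≤ r + s := by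
    rw [hBeq]; exact norm_sub_le _ _
  have hA' : ‖(-z + β • (x - yb)) - (-z' + β • (x' - yb'))‖ ≤ 2 * t + 2 * β * s := by
    have : β * r ≤ β * s + t := by
      have h := mul_le_mul_of_nonneg_left hr hβ.le
      rw [mul_add, ← mul_assoc, hβγ, one_mul] at h
      linarith
    linarith
  have hB' : ‖(yb - x) - (yb' - x')‖ ≤ 2 * s + β⁻¹ * t := by linarith
  set A : ℝ := ‖(-z + β • (x - yb)) - (-z' + β • (x' - yb'))‖ with hAdef
  set B : ℝ := ‖(yb - x) - (yb' - x')‖ with hBdef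
  have hA0 : 0 ≤ A := norm_nonneg _
  have hB0 : 0 ≤ B := norm_nonneg _
  set K : ℝ := (1 + β) ^ 2 + (1 + 1 / (2 * β)) ^ 2 with hK
  have hK0 : 0 ≤ K := by positivity
  have hmain : A ^ 2 + B ^ 2 ≤ 4 * K * (s ^ 2 + t ^ 2) := by
    have hA2 : A ^ 2 ≤ (2 * t + 2 * β * s) ^ 2 := pow_le_pow_left₀ hA0 hA' 2
    have hB2 : B ^ 2 ≤ (2 * s + β⁻¹ * t) ^ 2 := pow_le_pow_left₀ hB0 hB' 2
    have h2β : 1 / (2 * β) = β⁻¹ / 2 := by field_simp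
    have hkey := key5 s t β β⁻¹ hs0 ht0 hβ hγ
    rw [hK, h2β]
    linarith
  have hrhs : 2 * Real.sqrt K * Real.sqrt (s ^ 2 + t ^ 2)
      = Real.sqrt (4 * K * (s ^ 2 + t ^ 2)) := by
    rw [Real.sqrt_mul (by positivity), Real.sqrt_mul (by norm_num : (0:ℝ) ≤ 4),
      show (4:ℝ) = 2 ^ 2 by norm_num, Real.sqrt_sq (by norm_num : (0:ℝ) ≤ 2)]
  rw [hrhs]
  exact Real.sqrt_le_sqrt hmain
end

section
/- Let X ⊆ ℝⁿ be a closed convex set and F : ℝⁿ → ℝ continuously differentiable with L_{∇F}-Lipschitz gradient. Define ȳ(x,z,1) = Π_X(x − z) and V(x,z) = ‖ȳ(x,z,1) − x‖² + ‖z − ∇F(x)‖². For x ∈ X, let ŷ = argmin_{y ∈ X} (F(y) + ½‖y−x‖²) and ẑ = ∇F(ŷ). Then ‖ŷ − x‖² ≤ V(x, ẑ) ≤ (1 + L_{∇F}²)·‖ŷ − x‖². -/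
open scoped RealInnerProductSpace

lemma vi_aux {n : ℕ} (X : Set (EuclideanSpace ℝ (Fin n))) (hXconv : Convex ℝ X)
    (F : EuclideanSpace ℝ (Fin n) → ℝ)
    (hF : Differentiable ℝ F)
    (x : EuclideanSpace ℝ (Fin n))
    (yhat : EuclideanSpace ℝ (Fin n)) (hyhatX : yhat ∈ X)
    (hyhat : IsMinOn (fun y => F y + (1 / 2) * ‖y - x‖ ^ 2) X yhat)
    (w : EuclideanSpace ℝ (Fin n)) (hw : w ∈ X) :
    0 ≤ ⟪gradient F yhat, w - yhat⟫ + ⟪yhat - x, w - yhat⟫ := by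
  have hcone : w - yhat ∈ posTangentConeAt X yhat :=
    sub_mem_posTangentConeAt_of_segment_subset (hXconv.segment_subset hyhatX hw)
  have hFd : HasFDerivAt F ((InnerProductSpace.toDual ℝ _) (gradient F yhat)) yhat :=
    (hF yhat).hasGradientAt.hasFDerivAt
  have hid : HasFDerivAt (fun y : EuclideanSpace ℝ (Fin n) => y - x)
      (ContinuousLinearMap.id ℝ _) yhat := (hasFDerivAt_id yhat).sub_const x
  have hsq := (hid.inner ℝ hid).const_smul (1/2 : ℝ)
  have hg := (hFd.add hsq).hasFDerivWithinAt (s := X)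
  have hyhat' : IsMinOn (fun y => F y + (1/2 : ℝ) • ⟪y - x, y - x⟫) X yhat := by
    have : (fun y : EuclideanSpace ℝ (Fin n) => F y + (1/2 : ℝ) • ⟪y - x, y - x⟫)
        = fun y => F y + (1 / 2) * ‖y - x‖ ^ 2 := by
      funext y; rw [smul_eq_mul, real_inner_self_eq_norm_sq]
    rw [this]; exact hyhat
  have h0 := (hyhat'.localize).hasFDerivWithinAt_nonneg hg hcone
  simp only [ContinuousLinearMap.add_apply, ContinuousLinearMap.smul_apply,
    ContinuousLinearMap.comp_apply, ContinuousLinearMap.prod_apply,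
    ContinuousLinearMap.id_apply, fderivInnerCLM_apply,
    InnerProductSpace.toDual_apply_apply, smul_eq_mul] at h0
  linarith [real_inner_comm (w - yhat) (gradient F yhat), real_inner_comm (w - yhat) (yhat - x)]

theorem stmt8 {n : ℕ} (X : Set (EuclideanSpace ℝ (Fin n)))
    (hXne : X.Nonempty) (hXcl : IsClosed X) (hXconv : Convex ℝ X)
    (F : EuclideanSpace ℝ (Fin n) → ℝ) (L : ℝ)
    (hF : Differentiable ℝ F)
    (hFL : ∀ u v, ‖gradient F u - gradient F v‖ ≤ L * ‖u - v‖)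
    (x : EuclideanSpace ℝ (Fin n)) (hx : x ∈ X)
    (yhat : EuclideanSpace ℝ (Fin n)) (hyhatX : yhat ∈ X)
    (hyhat : IsMinOn (fun y => F y + (1 / 2) * ‖y - x‖ ^ 2) X yhat)
    (zhat : EuclideanSpace ℝ (Fin n)) (hzhat : zhat = gradient F yhat)
    (p : EuclideanSpace ℝ (Fin n)) (hpX : p ∈ X)
    (hp : IsMinOn (fun y => ‖y - (x - zhat)‖) X p) :
    ‖yhat - x‖ ^ 2 ≤ ‖p - x‖ ^ 2 + ‖zhat - gradient F x‖ ^ 2 ∧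
    ‖p - x‖ ^ 2 + ‖zhat - gradient F x‖ ^ 2 ≤ (1 + L ^ 2) * ‖yhat - x‖ ^ 2 := by
  set u := x - zhat with hu
  -- key inner product inequality for yhat
  have hkey : ∀ w ∈ X, 0 ≤ ⟪yhat - u, w - yhat⟫ := by
    intro w hw
    have h := vi_aux X hXconv F hF x yhat hyhatX hyhat w hw
    have : yhat - u = zhat + (yhat - x) := by rw [hu]; abel
    rw [this, inner_add_left, hzhat]
    linarith
  -- pythagoras-type expansion
  have hpyth : ∀ w ∈ X, ‖yhat - u‖ ^ 2 + ‖w - yhat‖ ^ 2 ≤ ‖w - u‖ ^ 2 := by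
    intro w hw
    have hexp : ‖w - u‖ ^ 2 = ‖yhat - u‖ ^ 2 + 2 * ⟪yhat - u, w - yhat⟫ + ‖w - yhat‖ ^ 2 := by
      have : w - u = (yhat - u) + (w - yhat) := by abel
      rw [this, norm_add_sq_real]
    have := hkey w hw
    linarith
  -- p = yhat
  have hple : ‖p - u‖ ≤ ‖yhat - u‖ := hp hyhatX
  have hple2 : ‖p - u‖ ^ 2 ≤ ‖yhat - u‖ ^ 2 :=
    pow_le_pow_left₀ (norm_nonneg _) hple 2
  have hpz : ‖p - yhat‖ ^ 2 ≤ 0 := by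
    have := hpyth p hpX
    linarith
  have hpeq : p = yhat := by
    have : ‖p - yhat‖ = 0 := by nlinarith [norm_nonneg (p - yhat)]
    rwa [norm_sub_eq_zero_iff] at this
  rw [hpeq]
  constructor
  · nlinarith [norm_nonneg (zhat - gradient F x), sq_nonneg ‖zhat - gradient F x‖]
  · have hlip : ‖zhat - gradient F x‖ ≤ L * ‖yhat - x‖ := by
      rw [hzhat]; exact hFL yhat x
    have h2 : ‖zhat - gradient F x‖ ^ 2 ≤ (L * ‖yhat - x‖) ^ 2 :=
      pow_le_pow_left₀ (norm_nonneg _) hlip 2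
    nlinarith [sq_nonneg ‖yhat - x‖]
end
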